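/- Let κ be a Mahlo cardinal. For each γ < κ, the set D_γ := {(t, h) ∈ K_κ : the height of t is > γ} is dense in K_κ and |γ|^+-directed-closed. Hence K_κ is almost κ-directed-closed. -/

import Mathlib

set_option autoImplicit false

noncomputable section

open FirstOrder Language Set

universe u

/-! ## The language of set theory (one binary relation, read as membership) -/

/-- We read the binary relation of `Language.order` as set-membership. -/
instance ZFSet.instLE : LE ZFSet.{0} := ⟨fun x y => x ∈ y⟩

instance zfStructure : Language.order.Structure ZFSet.{0} := Language.orderStructure ZFSet


instance subclassStructure (W : Set ZFSet.{0}) : Language.order.Structure W :=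
  Language.orderStructure W

/-! ## Von Neumann ordinals inside `ZFSet` -/

/-- The von Neumann ordinal associated to an ordinal. -/
noncomputable def ordZF (o : Ordinal.{0}) : ZFSet.{0} :=
  ZFSet.range (fun i : o.ToType => ordZF ((Ordinal.ToType.mk (o := o)).symm i).1)
termination_by o
decreasing_by exact ((Ordinal.ToType.mk (o := o)).symm i).2

/-- `V_θ` as a class of sets, relative to an ambient class `W`. -/
def VsetIn (W : Set ZFSet.{0}) (θ : Ordinal.{0}) : Set ZFSet.{0} :=
  {x | x ∈ W ∧ x.rank < θ}

/-- `V_θ` as a class of sets. -/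
def Vset (θ : Ordinal.{0}) : Set ZFSet.{0} := VsetIn Set.univ θ

/-- Code a set of ordinals, bounded by `b`, as a `ZFSet`. -/
def zfOfSet (X : Set Ordinal.{0}) (b : Ordinal.{0}) : ZFSet.{0} :=
  ZFSet.sep (fun z => ∃ α ∈ X, z = ordZF α) (ordZF b)

/-! ## Clubs and stationary sets -/

/-- `C` is closed and unbounded in `λ`. -/
def IsClubIn (C : Set Ordinal.{0}) (l : Ordinal.{0}) : Prop :=
  (∀ x ∈ C, x < l) ∧ (∀ a < l, ∃ b ∈ C, a ≤ b) ∧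
    (∀ a < l, (∀ b < a, ∃ c ∈ C, b < c ∧ c < a) → (0 < a) → a ∈ C)

/-- `S` is stationary in `λ`. -/
def IsStationaryIn (S : Set Ordinal.{0}) (l : Ordinal.{0}) : Prop :=
  ∀ C, IsClubIn C l → (S ∩ C).Nonempty

/-- An ordinal is (the ordinal of) an inaccessible cardinal. -/
def InaccOrd (o : Ordinal.{0}) : Prop :=
  o.card.IsInaccessible ∧ o.card.ord = o

/-- An ordinal is (the ordinal of) a cardinal. -/
def IsCardOrd (o : Ordinal.{0}) : Prop := o.card.ord = o

/-- The cardinal successor of (the cardinality of) an ordinal, as an ordinal. -/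
def cardSucc (o : Ordinal.{0}) : Ordinal.{0} := (Order.succ o.card).ord

/-- A Mahlo cardinal (as an ordinal). -/
def MahloOrd (o : Ordinal.{0}) : Prop :=
  InaccOrd o ∧ IsStationaryIn {δ | δ < o ∧ InaccOrd δ} o

/-- `θ` is a successor inaccessible: inaccessible with an inaccessible predecessor
and no inaccessibles strictly in between. -/
def SuccInacc (θ : Ordinal.{0}) : Prop :=
  InaccOrd θ ∧ ∃ μ < θ, InaccOrd μ ∧ ∀ ν, μ < ν → ν < θ → ¬ InaccOrd ν

/-- `a` is a limit ordinal. -/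
def IsLimitOrd (a : Ordinal.{0}) : Prop := 0 < a ∧ ∀ b < a, b + 1 < a

/-! ## The Lévy hierarchy of formulas (with `Σ₀ = ` quantifier-free) -/

mutual
  /-- `Σ_n` formulas (simplified Lévy hierarchy over quantifier-free formulas). -/
  inductive IsSigmaF (L : Language) (α : Type u) : ℕ → ∀ {n : ℕ}, L.BoundedFormula α n → Prop
    | qf {m} {n : ℕ} {φ : L.BoundedFormula α n} : φ.IsQF → IsSigmaF L α m φ → IsSigmaF L α m φ
    | of_qf {n : ℕ} {φ : L.BoundedFormula α n} : φ.IsQF → IsSigmaF L α 0 φ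
    | mono {m} {n : ℕ} {φ : L.BoundedFormula α n} : IsSigmaF L α m φ → IsSigmaF L α (m+1) φ
    | ex {m} {n : ℕ} {φ : L.BoundedFormula α (n+1)} :
        IsSigmaF L α (m+1) φ.ex → IsSigmaF L α (m+1) φ.ex
    | step {m} {n : ℕ} {φ : L.BoundedFormula α (n+1)} :
        IsPiF L α m φ → IsSigmaF L α (m+1) φ.ex

  /-- `Π_n` formulas. -/
  inductive IsPiF (L : Language) (α : Type u) : ℕ → ∀ {n : ℕ}, L.BoundedFormula α n → Prop
    | of_qf {n : ℕ} {φ : L.BoundedFormula α n} : φ.IsQF → IsPiF L α 0 φ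
    | mono {m} {n : ℕ} {φ : L.BoundedFormula α n} : IsPiF L α m φ → IsPiF L α (m+1) φ
    | step {m} {n : ℕ} {φ : L.BoundedFormula α (n+1)} :
        IsSigmaF L α m φ → IsPiF L α (m+1) φ.all
end

/-- `θ ∈ C^{(n)}` relative to an ambient class `W` : `V_θ ∩ W` is a
`Σ_n`-elementary substructure of `W`. -/
def InCC (W : Set ZFSet.{0}) (n : ℕ) (θ : Ordinal.{0}) : Prop :=
  ∀ (k : ℕ) (φ : Language.order.Formula (Fin k)),
    (IsSigmaF Language.order (Fin k) n φ ∨ IsPiF Language.order (Fin k) n φ) →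
    ∀ v : Fin k → (VsetIn W θ),
      φ.Realize v ↔ φ.Realize (fun i => (⟨(v i).1, (v i).2.1⟩ : W))

/-! ## Elementary embeddings of (relative) classes -/

/-- An elementary embedding `j : W → M` where `M ⊆ W` is a transitive subclass. -/
structure ClassEmbOver (W : Set ZFSet.{0}) where
  M : Set ZFSet.{0}
  M_sub : M ⊆ W
  M_trans : ∀ x ∈ M, ∀ y : ZFSet, y ∈ x → y ∈ M
  j : ZFSet.{0} → ZFSet.{0}
  maps : ∀ x, x ∈ W → j x ∈ M
  elem : ∀ (k : ℕ) (φ : Language.order.Formula (Fin k)) (v : Fin k → W),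
    φ.Realize v ↔ φ.Realize (fun i => (⟨j (v i).1, maps _ (v i).2⟩ : M))

variable {W : Set ZFSet.{0}}

/-- `j` has critical point `κ`. -/
def critAt (e : ClassEmbOver W) (κ : Ordinal.{0}) : Prop :=
  (∀ α < κ, e.j (ordZF α) = ordZF α) ∧ e.j (ordZF κ) ≠ ordZF κ

/-- The image `j(κ)` of an ordinal, as an ordinal. -/
def targ (e : ClassEmbOver W) (κ : Ordinal.{0}) : Ordinal.{0} := (e.j (ordZF κ)).rank

/-- `M^λ ∩ W ⊆ M`. -/
def SeqClosed (e : ClassEmbOver W) (l : Ordinal.{0}) : Prop :=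
  ∀ f y : ZFSet.{0}, f ∈ W → ZFSet.IsFunc (ordZF l) y f →
    (∀ z w : ZFSet, z.pair w ∈ f → w ∈ e.M) → f ∈ e.M

/-- `V_θ ⊆ M`. -/
def VsubM (e : ClassEmbOver W) (θ : Ordinal.{0}) : Prop :=
  ∀ x : ZFSet, x ∈ W → x.rank < θ → x ∈ e.M

/-- A `ZFSet` codes a set of ordinals below `l`. -/
def zfSubsetOrd (s : ZFSet.{0}) (l : Ordinal.{0}) : Prop :=
  ∀ x ∈ s, ∃ α < l, x = ordZF α

/-- The set of ordinals coded by a `ZFSet`. -/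
def toOrdSet (s : ZFSet.{0}) : Set Ordinal.{0} := {α | ordZF α ∈ s}

/-- `M` computes stationary subsets of `l` correctly. -/
def StatCorrect (e : ClassEmbOver W) (l : Ordinal.{0}) : Prop :=
  ∀ s ∈ e.M, zfSubsetOrd s l →
    (IsStationaryIn (toOrdSet s) l ↔
      ∀ C ∈ e.M, zfSubsetOrd C l → IsClubIn (toOrdSet C) l →
        (toOrdSet s ∩ toOrdSet C).Nonempty)

/-! ## Large cardinal notions -/

/-- `κ` is tall with target `θ` (relative to `W`). -/
def TallWithTarget (W : Set ZFSet.{0}) (κ θ : Ordinal.{0}) : Prop :=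
  ∃ e : ClassEmbOver W, critAt e κ ∧ SeqClosed e κ ∧ targ e κ = θ

/-- `κ` is `λ`-supercompact. -/
def IsLamSC (W : Set ZFSet.{0}) (κ l : Ordinal.{0}) : Prop :=
  ∃ e : ClassEmbOver W, critAt e κ ∧ l < targ e κ ∧ SeqClosed e l

/-- `κ` is supercompact. -/
def IsSC (W : Set ZFSet.{0}) (κ : Ordinal.{0}) : Prop :=
  ∀ l, κ < l → IsLamSC W κ l

/-- `κ` is `λ`-`C^{(n)}`-supercompact. -/
def IsLamCnSC (W : Set ZFSet.{0}) (n : ℕ) (κ l : Ordinal.{0}) : Prop :=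
  ∃ e : ClassEmbOver W, critAt e κ ∧ l < targ e κ ∧ SeqClosed e l ∧ InCC W n (targ e κ)

/-- `κ` is `C^{(n)}`-supercompact. -/
def IsCnSC (W : Set ZFSet.{0}) (n : ℕ) (κ : Ordinal.{0}) : Prop :=
  ∀ l, κ < l → IsLamCnSC W n κ l

/-- `κ` is enhanced `C^{(n)}`-tall: for every `λ > κ` there is `θ ∈ C^{(n)}` of
cofinality `> λ` such that `κ` is tall with target `θ`. -/
def EnhancedCnTall (W : Set ZFSet.{0}) (n : ℕ) (κ : Ordinal.{0}) : Prop :=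
  ∀ l, κ < l → ∃ θ, InCC W n θ ∧ l < θ.cof.ord ∧ TallWithTarget W κ θ

/-- `κ` is superstrong with target `θ`. -/
def SuperstrongTarget (W : Set ZFSet.{0}) (κ θ : Ordinal.{0}) : Prop :=
  ∃ e : ClassEmbOver W, critAt e κ ∧ targ e κ = θ ∧ VsubM e θ

/-- `κ` is enhanced superstrong with target `θ`: additionally `M^κ ⊆ M`. -/
def EnhSuperstrongTarget (W : Set ZFSet.{0}) (κ θ : Ordinal.{0}) : Prop :=
  ∃ e : ClassEmbOver W, critAt e κ ∧ targ e κ = θ ∧ VsubM e θ ∧ SeqClosed e κ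

/-- `κ` is stationary-correct superstrong with target `θ`. -/
def StatCorrectSuperstrong (W : Set ZFSet.{0}) (κ θ : Ordinal.{0}) : Prop :=
  ∃ e : ClassEmbOver W, critAt e κ ∧ targ e κ = θ ∧ VsubM e θ ∧ StatCorrect e θ

/-! ## Axiom 𝒜 -/

/-- Axiom `𝒜`, relative to `W`. -/
def AxiomA (W : Set ZFSet.{0}) : Prop :=
  (∀ α : Ordinal, ∃ κ, α < κ ∧ InaccOrd κ) ∧
  (∀ δ l, StatCorrectSuperstrong W δ l → InaccOrd l →
    ∀ θ, δ < θ → θ < l → SuccInacc θ → TallWithTarget W δ θ)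

/-- Elementary embedding between two set-sized structures `⟨A,∈⟩ → ⟨B,∈⟩`. -/
structure SetEmb (A B : Set ZFSet.{0}) where
  j : ZFSet.{0} → ZFSet.{0}
  maps : ∀ x, x ∈ A → j x ∈ B
  elem : ∀ (k : ℕ) (φ : Language.order.Formula (Fin k)) (v : Fin k → A),
    φ.Realize v ↔ φ.Realize (fun i => (⟨j (v i).1, maps _ (v i).2⟩ : B))

/-- critical point for set embeddings. -/
def setCritAt (A B : Set ZFSet.{0}) (e : SetEmb A B) (κ : Ordinal.{0}) : Prop :=
  (∀ α < κ, e.j (ordZF α) = ordZF α) ∧ e.j (ordZF κ) ≠ ordZF κ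

/-- `j(κ)` for set embeddings. -/
def setTarg (A B : Set ZFSet.{0}) (e : SetEmb A B) (κ : Ordinal.{0}) : Ordinal.{0} :=
  (e.j (ordZF κ)).rank


/-! ## Trees with a level function -/

/-- A tree on a set of ordinals, presented with a level function. -/
structure LvTree : Type 1 where
  node : Set Ordinal.{0}
  lt : Ordinal.{0} → Ordinal.{0} → Prop
  level : Ordinal.{0} → Ordinal.{0}
  lt_mem : ∀ {x y}, lt x y → x ∈ node ∧ y ∈ node
  lt_trans' : ∀ {x y z}, lt x y → lt y z → lt x z
  level_mono : ∀ {x y}, lt x y → level x < level y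
  pred_linear : ∀ {x y z}, lt y x → lt z x → lt y z ∨ y = z ∨ lt z y
  pred_ex : ∀ x ∈ node, ∀ β < level x, ∃ y, lt y x ∧ level y = β

/-- The `β`-th level of the tree. -/
def LvTree.lvl (T : LvTree) (β : Ordinal.{0}) : Set Ordinal.{0} :=
  {x | x ∈ T.node ∧ T.level x = β}

/-- The nodes of level `< β`. -/
def LvTree.below (T : LvTree) (β : Ordinal.{0}) : Set Ordinal.{0} :=
  {x | x ∈ T.node ∧ T.level x < β}

/-- Two tree-incomparable nodes. -/
def LvTree.Incomp (T : LvTree) (x y : Ordinal.{0}) : Prop :=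
  ¬ T.lt x y ∧ ¬ T.lt y x ∧ x ≠ y

/-- There is a regressive map on the `δ`-th level: `f x <_T x` and for incomparable
`x, y` every common predecessor lies below both `f x` and `f y`
(i.e. `x ∧ y <_T f x, f y`). -/
def RegressiveAt (T : LvTree) (δ : Ordinal.{0}) : Prop :=
  ∃ f : Ordinal.{0} → Ordinal.{0},
    (∀ x ∈ T.lvl δ, T.lt (f x) x) ∧
    (∀ x ∈ T.lvl δ, ∀ y ∈ T.lvl δ, T.Incomp x y →
      ∀ z, T.lt z x → T.lt z y → T.lt z (f x) ∧ T.lt z (f y))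

/-- A chain in the tree. -/
def IsTreeChain (T : LvTree) (b : Set Ordinal.{0}) : Prop :=
  b ⊆ T.node ∧ ∀ x ∈ b, ∀ y ∈ b, T.lt x y ∨ x = y ∨ T.lt y x

/-- A branch: a maximal chain. -/
def IsTreeBranch (T : LvTree) (b : Set Ordinal.{0}) : Prop :=
  IsTreeChain T b ∧ ∀ b', IsTreeChain T b' → b ⊆ b' → b = b'

/-- A cofinal branch of a tree of height `κ`. -/
def CofBranch (T : LvTree) (κ : Ordinal.{0}) (b : Set Ordinal.{0}) : Prop :=
  IsTreeBranch T b ∧ ∀ β < κ, ∃ x ∈ b, T.level x = β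

/-- A `κ`-regressive `κ`-Kurepa tree on `κ`. -/
def KurepaTree (κ : Ordinal.{0}) (T : LvTree) : Prop :=
  T.node ⊆ Set.Iio κ ∧ (∀ x ∈ T.node, T.level x < κ) ∧
  (∀ β < κ, (T.lvl β).Nonempty) ∧
  (∀ β < κ, Cardinal.mk (T.lvl β) < Cardinal.lift.{1} κ.card) ∧
  Cardinal.lift.{1} (Order.succ κ.card) ≤ Cardinal.mk {b : Set Ordinal.{0} | CofBranch T κ b} ∧
  (∀ δ < κ, InaccOrd δ → RegressiveAt T δ)

/-! ## The forcing `K_κ` adding a `κ`-regressive `κ`-Kurepa tree -/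

/-- A condition of `K_κ`: a normal tree on `κ` of successor height `top + 1` with
small levels, regressive maps at inaccessible levels, together with a one-to-one
map `h` from the top level into `κ⁺`. -/
structure KCond (κ : Ordinal.{0}) : Type 1 where
  t : LvTree
  top : Ordinal.{0}
  h : Ordinal.{0} → Ordinal.{0}
  node_sub : t.node ⊆ Set.Iio κ
  top_lt : top < κ
  level_le : ∀ x ∈ t.node, t.level x ≤ top
  levels_ne : ∀ β ≤ top, (t.lvl β).Nonempty
  small : ∀ β, Cardinal.mk (t.lvl β) < Cardinal.lift.{1} κ.card
  normal : ∀ x ∈ t.node, ∀ β, t.level x ≤ β → β ≤ top → ∃ y ∈ t.lvl β, t.lt x y ∨ x = y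
  regr : ∀ δ, δ ≤ top → InaccOrd δ → RegressiveAt t δ
  h_inj : ∀ x ∈ t.lvl top, ∀ y ∈ t.lvl top, h x = h y → x = y
  h_lt : ∀ x ∈ t.lvl top, h x < cardSucc κ

/-- The order of `K_κ`: `p ≤ q` iff the tree of `q` is the restriction of the tree
of `p` to the height of `q`, `ran(q.h) ⊆ ran(p.h)` and `q.h⁻¹(ξ) <_t p.h⁻¹(ξ)`. -/
def KLE (κ : Ordinal.{0}) (p q : KCond κ) : Prop :=
  q.top ≤ p.top ∧
  (∀ x, x ∈ q.t.node ↔ x ∈ p.t.node ∧ p.t.level x ≤ q.top) ∧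
  (∀ x ∈ q.t.node, ∀ y ∈ q.t.node, (q.t.lt x y ↔ p.t.lt x y)) ∧
  (∀ x ∈ q.t.node, q.t.level x = p.t.level x) ∧
  (∀ ξ, (∃ x ∈ q.t.lvl q.top, q.h x = ξ) → ∃ y ∈ p.t.lvl p.top, p.h y = ξ) ∧
  (∀ x ∈ q.t.lvl q.top, ∀ y ∈ p.t.lvl p.top, q.h x = p.h y → (p.t.lt x y ∨ x = y))

/-!
Both halves come from one construction. Given a directed family `D` of conditions, the union of
their trees is a tree, and each label `ξ` of a top node determines a branch of it: the nodes lying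
below a top node labelled `ξ` in some member of `D` (directedness and injectivity of the labellings
make this a chain). If `a` bounds the tops of `D` and every level below `a` is reached, one stacks
new levels `a, …, top` on the union, one new node per label and level, above the branch of that
label; the result extends every member of `D`. Density is the case `D = {p}`, `a = p.top + 1`;
closure is the case `a = sup (p.top + 1)`, `top = a`.

The regressive maps of the new tree at levels below `a` come from the members of `D`; above `a`,
sending a new node to the new node of the same label at level `a` is regressive. At level `a`
itself no regressive map is available in general, and none is needed: `a` is never inaccessible,
being a successor or, for a family of size `≤ |γ|` with tops above `γ`, a limit of cofinality
`≤ |γ| < a`.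
-/

open Cardinal Order

namespace InaccOrd

variable {κ : Ordinal.{0}}

theorem lt_iff_card_lt (hκ : InaccOrd κ) {o : Ordinal.{0}} : o < κ ↔ o.card < κ.card := by
  conv_lhs => rw [← hκ.2]
  exact lt_ord

theorem isSuccLimit (hκ : InaccOrd κ) : IsSuccLimit κ :=
  hκ.2 ▸ isSuccLimit_ord hκ.1.aleph0_lt.le

theorem add_lt (hκ : InaccOrd κ) {a b : Ordinal.{0}} (ha : a < κ) (hb : b < κ) : a + b < κ := by
  rw [hκ.lt_iff_card_lt, Ordinal.card_add] at *
  exact add_lt_of_lt hκ.1.aleph0_lt.le ha hb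

theorem add_one_lt (hκ : InaccOrd κ) {a : Ordinal.{0}} (ha : a < κ) : a + 1 < κ := by
  simpa only [← succ_eq_add_one] using hκ.isSuccLimit.succ_lt ha

theorem pos (hκ : InaccOrd κ) : 0 < κ :=
  hκ.lt_iff_card_lt.2 (by simpa using hκ.1.pos)

theorem aleph0_le_lift_card (hκ : InaccOrd κ) : ℵ₀ ≤ lift.{1} κ.card :=
  aleph0_le_lift.2 hκ.1.aleph0_lt.le

theorem isRegular_lift_card (hκ : InaccOrd κ) : (lift.{1} κ.card).IsRegular :=
  hκ.1.isRegular.lift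

theorem mk_Iio_lt (hκ : InaccOrd κ) {a : Ordinal.{0}} (ha : a < κ) :
    #(Iio a) < lift.{1} κ.card := by
  rw [mk_Iio_ordinal, lift_lt, ← hκ.lt_iff_card_lt]
  exact ha

theorem cof_eq (hκ : InaccOrd κ) : κ.cof = κ.card := by
  conv_lhs => rw [← hκ.2]
  exact hκ.1.isRegular.cof_ord

theorem sSup_lt (hκ : InaccOrd κ) {S : Set Ordinal.{0}} (hS : ∀ x ∈ S, x < κ)
    (hsmall : #S < lift.{1} κ.card) : sSup S < κ := by
  refine Ordinal.sSup_lt_of_lt_cof ?_ hS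
  rwa [← Ordinal.lift_cof, hκ.cof_eq]

theorem mk_biUnion_lt (hκ : InaccOrd κ) {α : Type 1} {D : Set α} (hD : #D < lift.{1} κ.card)
    {S : α → Set Ordinal.{0}} (hS : ∀ p ∈ D, #(S p) < lift.{1} κ.card) :
    #(⋃ p ∈ D, S p) < lift.{1} κ.card :=
  (card_biUnion_lt_iff_forall_of_isRegular hκ.isRegular_lift_card hD).2 hS

end InaccOrd

/-- The supremum is not attained, so its cofinality is at most `|γ|`. -/
theorem not_inaccOrd_sSup {S : Set Ordinal.{0}} (hbdd : BddAbove S)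
    (hsucc : ∀ x ∈ S, ¬ IsSuccLimit x) {γ : Ordinal.{0}} (hsmall : #S ≤ lift.{1} γ.card)
    (hγ : γ < sSup S) : ¬ InaccOrd (sSup S) := by
  intro hsup
  have hlt : ∀ x ∈ S, x < sSup S := fun x hx =>
    (le_csSup hbdd hx).lt_of_ne fun h => hsucc x hx (h ▸ hsup.isSuccLimit)
  refine (hsup.sSup_lt hlt (hsmall.trans_lt ?_)).false
  rw [lift_lt, ← hsup.lt_iff_card_lt]
  exact hγ

theorem exists_injOn_Ico {κ : Ordinal.{0}} (hκ : InaccOrd κ) {α : Type 1} {S : Set α}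
    (hS : #S < lift.{1} κ.card) {Λ : Ordinal.{0}} (hΛ : Λ < κ) :
    ∃ c : α → Ordinal.{0}, InjOn c S ∧ MapsTo c S (Ico Λ κ) := by
  have hshift : Function.Injective fun o : Iio κ =>
      (⟨Λ + o, le_self_add, hκ.add_lt hΛ o.2⟩ : Ico Λ κ) :=
    fun o o' h => Subtype.ext (add_left_cancel (congrArg Subtype.val h))
  obtain ⟨e⟩ := (le_def S (Ico Λ κ)).1 <|
    (hS.trans_eq (mk_Iio_ordinal κ).symm).le.trans (mk_le_of_injective hshift)
  classical
  refine ⟨fun x => if hx : x ∈ S then e ⟨x, hx⟩ else 0, fun x hx y hy hxy => ?_,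
    fun x hx => ?_⟩
  · simp only [dif_pos hx, dif_pos hy] at hxy
    exact congrArg Subtype.val (e.injective (Subtype.ext hxy))
  · simp only [dif_pos hx]
    exact (e ⟨x, hx⟩).2

namespace LvTree

theorem exists_le_level (T : LvTree) {x : Ordinal.{0}} (hx : x ∈ T.node) {β : Ordinal.{0}}
    (hβ : β ≤ T.level x) : ∃ y, (T.lt y x ∨ y = x) ∧ T.level y = β := by
  rcases hβ.lt_or_eq with hβ | rfl
  · obtain ⟨y, hy, rfl⟩ := T.pred_ex x hx β hβ
    exact ⟨y, Or.inl hy, rfl⟩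
  · exact ⟨x, Or.inr rfl, rfl⟩

def point : LvTree where
  node := {0}
  lt _ _ := False
  level _ := 0
  lt_mem h := h.elim
  lt_trans' h := h.elim
  level_mono h := h.elim
  pred_linear h := h.elim
  pred_ex _ _ _ hβ := absurd zero_le hβ.not_ge

/-- Data for stacking new levels `base, …, top` on a tree `T` of height `base`: above the
branch `branch ξ` of `T` (for each label `ξ`) a new node `code (ξ, b)` is put at each level `b`. -/
structure Cap (T : LvTree) where
  labels : Set Ordinal.{0}
  branch : Ordinal.{0} → Set Ordinal.{0}
  base : Ordinal.{0}
  top : Ordinal.{0}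
  code : Ordinal.{0} × Ordinal.{0} → Ordinal.{0}
  level_lt_base : ∀ x ∈ T.node, T.level x < base
  branch_subset : ∀ ξ ∈ labels, branch ξ ⊆ T.node
  mem_branch_of_lt : ∀ ξ ∈ labels, ∀ y ∈ branch ξ, ∀ z, T.lt z y → z ∈ branch ξ
  branch_chain : ∀ ξ ∈ labels, ∀ x ∈ branch ξ, ∀ y ∈ branch ξ, T.lt x y ∨ x = y ∨ T.lt y x
  exists_mem_branch : ∀ ξ ∈ labels, ∀ β < base, ∃ x ∈ branch ξ, T.level x = β
  injOn_code : InjOn code (labels ×ˢ Icc base top)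
  code_notMem : ∀ q ∈ labels ×ˢ Icc base top, code q ∉ T.node

namespace Cap

variable {T : LvTree} (C : T.Cap)

def slots : Set (Ordinal.{0} × Ordinal.{0}) := C.labels ×ˢ Icc C.base C.top

def lt (x y : Ordinal.{0}) : Prop :=
  T.lt x y ∨ ∃ ξ ∈ C.labels, ∃ b ∈ Icc C.base C.top, y = C.code (ξ, b) ∧
    (x ∈ C.branch ξ ∨ ∃ b' ∈ Icc C.base C.top, b' < b ∧ x = C.code (ξ, b'))

def decode (x : Ordinal.{0}) : Ordinal.{0} × Ordinal.{0} := Function.invFunOn C.code C.slots x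

open Classical in
def level (x : Ordinal.{0}) : Ordinal.{0} := if x ∈ T.node then T.level x else (C.decode x).2

variable {C}

theorem decode_code {ξ b : Ordinal.{0}} (hξ : ξ ∈ C.labels) (hb : b ∈ Icc C.base C.top) :
    C.decode (C.code (ξ, b)) = (ξ, b) :=
  C.injOn_code.leftInvOn_invFunOn (show (ξ, b) ∈ C.slots from ⟨hξ, hb⟩)

theorem code_inj {ξ b ξ' b' : Ordinal.{0}} (hξ : ξ ∈ C.labels) (hb : b ∈ Icc C.base C.top)
    (hξ' : ξ' ∈ C.labels) (hb' : b' ∈ Icc C.base C.top) (h : C.code (ξ, b) = C.code (ξ', b')) :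
    ξ = ξ' ∧ b = b' :=
  Prod.ext_iff.1 (C.injOn_code ⟨hξ, hb⟩ ⟨hξ', hb'⟩ h)

theorem level_of_mem {x : Ordinal.{0}} (hx : x ∈ T.node) : C.level x = T.level x := if_pos hx

theorem level_code {ξ b : Ordinal.{0}} (hξ : ξ ∈ C.labels) (hb : b ∈ Icc C.base C.top) :
    C.level (C.code (ξ, b)) = b := by
  rw [level, if_neg (C.code_notMem _ ⟨hξ, hb⟩), decode_code hξ hb]

theorem lt_iff_of_mem {x y : Ordinal.{0}} (hy : y ∈ T.node) : C.lt x y ↔ T.lt x y := by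
  refine ⟨?_, Or.inl⟩
  rintro (h | ⟨ξ, hξ, b, hb, rfl, -⟩)
  exacts [h, absurd hy (C.code_notMem _ ⟨hξ, hb⟩)]

theorem lt_code_iff {x ξ b : Ordinal.{0}} (hξ : ξ ∈ C.labels) (hb : b ∈ Icc C.base C.top) :
    C.lt x (C.code (ξ, b)) ↔
      x ∈ C.branch ξ ∨ ∃ b' ∈ Icc C.base C.top, b' < b ∧ x = C.code (ξ, b') := by
  refine ⟨?_, fun h => Or.inr ⟨ξ, hξ, b, hb, rfl, h⟩⟩
  rintro (h | ⟨ξ', hξ', b'', hb'', he, h⟩)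
  · exact absurd (T.lt_mem h).2 (C.code_notMem _ ⟨hξ, hb⟩)
  · obtain ⟨rfl, rfl⟩ := code_inj hξ hb hξ' hb'' he
    exact h

variable (C)

def tree : LvTree where
  node := T.node ∪ C.code '' C.slots
  lt := C.lt
  level := C.level
  lt_mem := by
    rintro x y (h | ⟨ξ, hξ, b, hb, rfl, hx | ⟨b', hb', -, rfl⟩⟩)
    · exact ⟨Or.inl (T.lt_mem h).1, Or.inl (T.lt_mem h).2⟩
    · exact ⟨Or.inl (C.branch_subset ξ hξ hx), Or.inr ⟨_, ⟨hξ, hb⟩, rfl⟩⟩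
    · exact ⟨Or.inr ⟨_, ⟨hξ, hb'⟩, rfl⟩, Or.inr ⟨_, ⟨hξ, hb⟩, rfl⟩⟩
  lt_trans' := by
    rintro x y z hxy (hyz | ⟨ξ, hξ, b, hb, rfl, hy | ⟨b', hb', hbb', rfl⟩⟩)
    · exact Or.inl (T.lt_trans' ((lt_iff_of_mem (T.lt_mem hyz).1).1 hxy) hyz)
    · have hy' := C.branch_subset ξ hξ hy
      exact Or.inr ⟨ξ, hξ, b, hb, rfl,
        Or.inl (C.mem_branch_of_lt ξ hξ y hy x ((lt_iff_of_mem hy').1 hxy))⟩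
    · rcases (lt_code_iff hξ hb').1 hxy with hx | ⟨b'', hb'', hb''b', rfl⟩
      · exact Or.inr ⟨ξ, hξ, b, hb, rfl, Or.inl hx⟩
      · exact Or.inr ⟨ξ, hξ, b, hb, rfl, Or.inr ⟨b'', hb'', hb''b'.trans hbb', rfl⟩⟩
  level_mono := by
    rintro x y (h | ⟨ξ, hξ, b, hb, rfl, hx | ⟨b', hb', hbb', rfl⟩⟩)
    · rw [level_of_mem (T.lt_mem h).1, level_of_mem (T.lt_mem h).2]
      exact T.level_mono h
    · have hx' := C.branch_subset ξ hξ hx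
      rw [level_of_mem hx', level_code hξ hb]
      exact (C.level_lt_base x hx').trans_le hb.1
    · rwa [level_code hξ hb', level_code hξ hb]
  pred_linear := by
    rintro x y z (hyx | ⟨ξ, hξ, b, hb, rfl, hy⟩) hzx
    · have hzx' := (lt_iff_of_mem (T.lt_mem hyx).2).1 hzx
      rcases T.pred_linear hyx hzx' with h | h | h
      exacts [Or.inl (Or.inl h), Or.inr (Or.inl h), Or.inr (Or.inr (Or.inl h))]
    rcases hy with hy | ⟨b₁, hb₁, -, rfl⟩ <;>
      rcases (lt_code_iff hξ hb).1 hzx with hz | ⟨b₂, hb₂, -, rfl⟩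
    · rcases C.branch_chain ξ hξ y hy z hz with h | h | h
      exacts [Or.inl (Or.inl h), Or.inr (Or.inl h), Or.inr (Or.inr (Or.inl h))]
    · exact Or.inl ((lt_code_iff hξ hb₂).2 (Or.inl hy))
    · exact Or.inr (Or.inr ((lt_code_iff hξ hb₁).2 (Or.inl hz)))
    · rcases lt_trichotomy b₁ b₂ with h | rfl | h
      · exact Or.inl ((lt_code_iff hξ hb₂).2 (Or.inr ⟨b₁, hb₁, h, rfl⟩))
      · exact Or.inr (Or.inl rfl)
      · exact Or.inr (Or.inr ((lt_code_iff hξ hb₁).2 (Or.inr ⟨b₂, hb₂, h, rfl⟩)))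
  pred_ex := by
    rintro x (hx | ⟨⟨ξ, b⟩, ⟨hξ, hb⟩, rfl⟩) β hβ
    · rw [level_of_mem hx] at hβ
      obtain ⟨y, hy, rfl⟩ := T.pred_ex x hx β hβ
      exact ⟨y, Or.inl hy, level_of_mem (T.lt_mem hy).1⟩
    rw [level_code hξ hb] at hβ
    rcases lt_or_ge β C.base with hβa | hβa
    · obtain ⟨y, hy, rfl⟩ := C.exists_mem_branch ξ hξ β hβa
      exact ⟨y, (lt_code_iff hξ hb).2 (Or.inl hy), level_of_mem (C.branch_subset ξ hξ hy)⟩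
    · have hβ' : β ∈ Icc C.base C.top := ⟨hβa, hβ.le.trans hb.2⟩
      exact ⟨_, (lt_code_iff hξ hb).2 (Or.inr ⟨β, hβ', hβ, rfl⟩), level_code hξ hβ'⟩

variable {C}

theorem code_mem_lvl {ξ b : Ordinal.{0}} (hξ : ξ ∈ C.labels) (hb : b ∈ Icc C.base C.top) :
    C.code (ξ, b) ∈ C.tree.lvl b :=
  ⟨Or.inr ⟨_, ⟨hξ, hb⟩, rfl⟩, level_code hξ hb⟩

theorem mem_lvl_iff {x β : Ordinal.{0}} :
    x ∈ C.tree.lvl β ↔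
      x ∈ T.lvl β ∨ ∃ ξ ∈ C.labels, β ∈ Icc C.base C.top ∧ x = C.code (ξ, β) := by
  constructor
  · rintro ⟨hx | ⟨⟨ξ, b⟩, ⟨hξ, hb⟩, rfl⟩, rfl⟩
    · exact Or.inl ⟨hx, (level_of_mem hx).symm⟩
    · refine Or.inr ⟨ξ, hξ, ?_⟩
      change C.level _ ∈ _ ∧ _ = C.code (ξ, C.level _)
      rw [level_code hξ hb]
      exact ⟨hb, rfl⟩
  · rintro (hx | ⟨ξ, hξ, hβ, rfl⟩)
    · exact ⟨Or.inl hx.1, (level_of_mem hx.1).trans hx.2⟩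
    · exact code_mem_lvl hξ hβ

theorem lvl_subset (β : Ordinal.{0}) :
    C.tree.lvl β ⊆ T.lvl β ∪ (fun ξ => C.code (ξ, β)) '' C.labels := by
  intro x hx
  rcases mem_lvl_iff.1 hx with hx | ⟨ξ, hξ, -, rfl⟩
  exacts [Or.inl hx, Or.inr ⟨ξ, hξ, rfl⟩]

theorem lvl_of_lt_base {β : Ordinal.{0}} (hβ : β < C.base) : C.tree.lvl β = T.lvl β := by
  ext x
  rw [mem_lvl_iff, or_iff_left]
  rintro ⟨-, -, hβ', -⟩
  exact hβ.not_ge hβ'.1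

theorem lvl_top (h : C.base ≤ C.top) :
    C.tree.lvl C.top = (fun ξ => C.code (ξ, C.top)) '' C.labels := by
  ext x
  rw [mem_lvl_iff]
  constructor
  · rintro (hx | ⟨ξ, hξ, -, rfl⟩)
    · exact absurd (hx.2 ▸ C.level_lt_base x hx.1) h.not_gt
    · exact ⟨ξ, hξ, rfl⟩
  · rintro ⟨ξ, hξ, rfl⟩
    exact Or.inr ⟨ξ, hξ, ⟨h, le_rfl⟩, rfl⟩

theorem regressiveAt_of_lt_base {δ : Ordinal.{0}} (hδ : δ < C.base) (hT : RegressiveAt T δ) :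
    RegressiveAt C.tree δ := by
  obtain ⟨f, hf, hfinc⟩ := hT
  rw [RegressiveAt, lvl_of_lt_base hδ]
  refine ⟨f, fun x hx => Or.inl (hf x hx), fun x hx y hy hxy z hzx hzy => ?_⟩
  have hxy' : T.Incomp x y := ⟨fun h => hxy.1 (Or.inl h), fun h => hxy.2.1 (Or.inl h), hxy.2.2⟩
  obtain ⟨h₁, h₂⟩ := hfinc x hx y hy hxy' z ((lt_iff_of_mem hx.1).1 hzx)
    ((lt_iff_of_mem hy.1).1 hzy)
  exact ⟨Or.inl h₁, Or.inl h₂⟩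

/-- Above the base level, the node of the same label at level `base` is a regressive choice:
nodes with different labels have only old nodes of `T` as common predecessors. -/
theorem regressiveAt_of_base_lt {δ : Ordinal.{0}} (hδ : C.base < δ) (hδtop : δ ≤ C.top) :
    RegressiveAt C.tree δ := by
  have hbase : C.base ∈ Icc C.base C.top := ⟨le_rfl, hδ.le.trans hδtop⟩
  have hδ' : δ ∈ Icc C.base C.top := ⟨hδ.le, hδtop⟩
  refine ⟨fun x => C.code ((C.decode x).1, C.base), fun x hx => ?_,
    fun x hx y hy hxy z hzx hzy => ?_⟩
  · obtain hx | ⟨ξ, hξ, -, rfl⟩ := mem_lvl_iff.1 hx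
    · exact absurd (hx.2 ▸ C.level_lt_base x hx.1) hδ.not_gt
    change C.lt (C.code ((C.decode (C.code (ξ, δ))).1, C.base)) _
    rw [decode_code hξ hδ']
    exact (lt_code_iff hξ hδ').2 (Or.inr ⟨C.base, hbase, hδ, rfl⟩)
  obtain hx | ⟨ξ, hξ, -, rfl⟩ := mem_lvl_iff.1 hx
  · exact absurd (hx.2 ▸ C.level_lt_base x hx.1) hδ.not_gt
  obtain hy | ⟨ξ', hξ', -, rfl⟩ := mem_lvl_iff.1 hy
  · exact absurd (hy.2 ▸ C.level_lt_base y hy.1) hδ.not_gt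
  have hξξ' : ξ ≠ ξ' := by
    rintro rfl
    exact hxy.2.2 rfl
  have hz : z ∈ C.branch ξ ∧ z ∈ C.branch ξ' := by
    rcases (lt_code_iff hξ hδ').1 hzx with hz | ⟨b, hb, -, rfl⟩ <;>
      rcases (lt_code_iff hξ' hδ').1 hzy with hz' | ⟨b', hb', -, he⟩
    · exact ⟨hz, hz'⟩
    · exact absurd (he ▸ C.branch_subset ξ hξ hz) (C.code_notMem _ ⟨hξ', hb'⟩)
    · exact absurd (C.branch_subset ξ' hξ' hz') (C.code_notMem _ ⟨hξ, hb⟩)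
    · exact absurd (code_inj hξ hb hξ' hb' he).1 hξξ'
  change C.lt z (C.code ((C.decode (C.code (ξ, δ))).1, C.base)) ∧
    C.lt z (C.code ((C.decode (C.code (ξ', δ))).1, C.base))
  rw [decode_code hξ hδ', decode_code hξ' hδ']
  exact ⟨(lt_code_iff hξ hbase).2 (Or.inl hz.1), (lt_code_iff hξ' hbase).2 (Or.inl hz.2)⟩

theorem exists_mem_lvl_of_le (hcover : ∀ x ∈ T.node, ∃ ξ ∈ C.labels, x ∈ C.branch ξ)
    {x β : Ordinal.{0}} (hx : x ∈ C.tree.node) (hxβ : C.level x ≤ β) (hβ : β ≤ C.top) :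
    ∃ y ∈ C.tree.lvl β, C.lt x y ∨ x = y := by
  rcases hx with hx | ⟨⟨ξ, b⟩, ⟨hξ, hb⟩, rfl⟩
  · obtain ⟨ξ, hξ, hxξ⟩ := hcover x hx
    rw [level_of_mem hx] at hxβ
    rcases lt_or_ge β C.base with hβa | hβa
    · obtain ⟨y, hy, rfl⟩ := C.exists_mem_branch ξ hξ β hβa
      have hy' := C.branch_subset ξ hξ hy
      refine ⟨y, (lvl_of_lt_base hβa).symm ▸ ⟨hy', rfl⟩, ?_⟩
      rcases C.branch_chain ξ hξ x hxξ y hy with h | h | h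
      · exact Or.inl (Or.inl h)
      · exact Or.inr h
      · exact absurd (T.level_mono h) hxβ.not_gt
    · exact ⟨_, code_mem_lvl hξ ⟨hβa, hβ⟩, Or.inl ((lt_code_iff hξ ⟨hβa, hβ⟩).2 (Or.inl hxξ))⟩
  · rw [level_code hξ hb] at hxβ
    have hβ' : β ∈ Icc C.base C.top := ⟨hb.1.trans hxβ, hβ⟩
    refine ⟨_, code_mem_lvl hξ hβ', ?_⟩
    rcases hxβ.lt_or_eq with h | rfl
    · exact Or.inl ((lt_code_iff hξ hβ').2 (Or.inr ⟨b, hb, h, rfl⟩))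
    · exact Or.inr rfl

section toKCond

variable (C) {κ : Ordinal.{0}} (hκ : InaccOrd κ)
  (hnode : T.node ⊆ Iio κ) (hsmall : ∀ β, #(T.lvl β) < lift.{1} κ.card)
  (hlabels : #C.labels < lift.{1} κ.card) (hne : C.labels.Nonempty)
  (hlabels_lt : ∀ ξ ∈ C.labels, ξ < cardSucc κ)
  (hcover : ∀ x ∈ T.node, ∃ ξ ∈ C.labels, x ∈ C.branch ξ)
  (hregr : ∀ δ < C.base, InaccOrd δ → RegressiveAt T δ)
  (hbase : ¬ InaccOrd C.base) (hbase_top : C.base ≤ C.top) (htop : C.top < κ)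
  (hcode : ∀ q ∈ C.slots, C.code q < κ)

def toKCond : KCond κ where
  t := C.tree
  top := C.top
  h x := (C.decode x).1
  node_sub := by
    rintro x (hx | ⟨q, hq, rfl⟩)
    exacts [hnode hx, hcode q hq]
  top_lt := htop
  level_le := by
    rintro x (hx | ⟨q, ⟨hξ, hb⟩, rfl⟩)
    · exact ((level_of_mem hx).trans_lt (C.level_lt_base x hx)).le.trans hbase_top
    · exact (level_code hξ hb).trans_le hb.2
  levels_ne β hβ := by
    obtain ⟨ξ, hξ⟩ := hne
    rcases lt_or_ge β C.base with hβa | hβa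
    · obtain ⟨x, hx, rfl⟩ := C.exists_mem_branch ξ hξ β hβa
      exact ⟨x, (lvl_of_lt_base hβa).symm ▸ ⟨C.branch_subset ξ hξ hx, rfl⟩⟩
    · exact ⟨_, code_mem_lvl hξ ⟨hβa, hβ⟩⟩
  small β := (mk_le_mk_of_subset (lvl_subset β)).trans_lt <| (mk_union_le _ _).trans_lt <|
    add_lt_of_lt hκ.aleph0_le_lift_card (hsmall β) (mk_image_le.trans_lt hlabels)
  normal x hx β hxβ hβ := exists_mem_lvl_of_le hcover hx hxβ hβ
  regr δ hδ hδi := by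
    rcases lt_trichotomy δ C.base with h | rfl | h
    · exact regressiveAt_of_lt_base h (hregr δ h hδi)
    · exact absurd hδi hbase
    · exact regressiveAt_of_base_lt h hδ
  h_inj x hx y hy hxy := by
    rw [lvl_top hbase_top] at hx hy
    obtain ⟨ξ, hξ, rfl⟩ := hx
    obtain ⟨ξ', hξ', rfl⟩ := hy
    have hb : C.top ∈ Icc C.base C.top := ⟨hbase_top, le_rfl⟩
    simp only [decode_code hξ hb, decode_code hξ' hb] at hxy
    rw [hxy]
  h_lt x hx := by
    rw [lvl_top hbase_top] at hx
    obtain ⟨ξ, hξ, rfl⟩ := hx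
    rw [decode_code hξ ⟨hbase_top, le_rfl⟩]
    exact hlabels_lt ξ hξ

variable {hκ hnode hsmall hlabels hne hlabels_lt hcover hregr hbase hbase_top htop hcode}

theorem toKCond_le {p : KCond κ}
    (hp_node : ∀ x, x ∈ p.t.node ↔ x ∈ T.node ∧ T.level x ≤ p.top)
    (hp_lt : ∀ x ∈ p.t.node, ∀ y ∈ p.t.node, p.t.lt x y ↔ T.lt x y)
    (hp_level : ∀ x ∈ p.t.node, p.t.level x = T.level x) (hp_top : p.top < C.base)
    (hp_labels : ∀ w ∈ p.t.lvl p.top, p.h w ∈ C.labels ∧ w ∈ C.branch (p.h w)) :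
    KLE κ (C.toKCond hκ hnode hsmall hlabels hne hlabels_lt hcover hregr hbase hbase_top htop
      hcode) p := by
  have hb : C.top ∈ Icc C.base C.top := ⟨hbase_top, le_rfl⟩
  refine ⟨hp_top.le.trans hbase_top, fun x => ?_, fun x hx y hy => ?_, fun x hx => ?_,
    ?_, ?_⟩
  · refine ⟨fun hx => ?_, ?_⟩
    · obtain ⟨hxT, hxp⟩ := (hp_node x).1 hx
      exact ⟨Or.inl hxT, (level_of_mem hxT).trans_le hxp⟩
    · rintro ⟨hx | ⟨⟨ξ, b⟩, ⟨hξ, hb⟩, rfl⟩, hxp⟩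
      · exact (hp_node x).2 ⟨hx, (level_of_mem hx).symm.trans_le hxp⟩
      · change C.level _ ≤ _ at hxp
        rw [level_code hξ hb] at hxp
        exact absurd (hp_top.trans_le hb.1) hxp.not_gt
  · exact (hp_lt x hx y hy).trans (lt_iff_of_mem ((hp_node y).1 hy).1).symm
  · exact (hp_level x hx).trans (level_of_mem ((hp_node x).1 hx).1).symm
  · rintro ξ ⟨w, hw, rfl⟩
    refine ⟨_, code_mem_lvl (hp_labels w hw).1 hb, ?_⟩
    exact congrArg Prod.fst (decode_code (hp_labels w hw).1 hb)
  · intro x hx y hy hxy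
    change y ∈ C.tree.lvl C.top at hy
    rw [lvl_top hbase_top] at hy
    obtain ⟨ξ, hξ, rfl⟩ := hy
    replace hxy : p.h x = ξ := by
      change p.h x = (C.decode (C.code (ξ, C.top))).1 at hxy
      rwa [decode_code hξ hb] at hxy
    have hxξ : x ∈ C.branch ξ := hxy ▸ (hp_labels x hx).2
    exact Or.inl ((lt_code_iff hξ hb).2 (Or.inl hxξ))

end toKCond

end Cap

end LvTree

namespace KLE

variable {κ : Ordinal.{0}} {r p : KCond κ}

theorem refl (p : KCond κ) : KLE κ p p :=
  ⟨le_rfl, fun x => ⟨fun hx => ⟨hx, p.level_le x hx⟩, And.left⟩, fun _ _ _ _ => Iff.rfl,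
    fun _ _ => rfl, fun _ h => h, fun x hx y hy h => Or.inr (p.h_inj x hx y hy h)⟩

theorem node_subset (h : KLE κ r p) : p.t.node ⊆ r.t.node := fun x hx => ((h.2.1 x).1 hx).1

theorem level_eq (h : KLE κ r p) {x : Ordinal.{0}} (hx : x ∈ p.t.node) :
    p.t.level x = r.t.level x :=
  h.2.2.2.1 x hx

theorem lt_iff (h : KLE κ r p) {x y : Ordinal.{0}} (hx : x ∈ p.t.node) (hy : y ∈ p.t.node) :
    p.t.lt x y ↔ r.t.lt x y :=
  h.2.2.1 x hx y hy

theorem exists_top_above (h : KLE κ r p) {w z : Ordinal.{0}} (hw : w ∈ p.t.lvl p.top)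
    (hz : p.t.lt z w ∨ z = w) : ∃ w' ∈ r.t.lvl r.top, r.h w' = p.h w ∧ (r.t.lt z w' ∨ z = w') := by
  obtain ⟨w', hw', hξ⟩ := h.2.2.2.2.1 (p.h w) ⟨w, hw, rfl⟩
  refine ⟨w', hw', hξ, ?_⟩
  rcases h.2.2.2.2.2 w hw w' hw' hξ.symm with hww' | rfl
  · rcases hz with hz | rfl
    · exact Or.inl (r.t.lt_trans' ((h.lt_iff (p.t.lt_mem hz).1 hw.1).1 hz) hww')
    · exact Or.inl hww'
  · rcases hz with hz | rfl
    · exact Or.inl ((h.lt_iff (p.t.lt_mem hz).1 hw.1).1 hz)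
    · exact Or.inr rfl

end KLE

namespace KCond

section

variable {κ : Ordinal.{0}} (D : Set (KCond κ))
  (hD : ∀ p ∈ D, ∀ q ∈ D, ∃ r ∈ D, KLE κ r p ∧ KLE κ r q)

include hD in
theorem level_eq_of_mem {p q : KCond κ} (hp : p ∈ D) (hq : q ∈ D) {x : Ordinal.{0}}
    (hxp : x ∈ p.t.node) (hxq : x ∈ q.t.node) : p.t.level x = q.t.level x := by
  obtain ⟨r, -, hrp, hrq⟩ := hD p hp q hq
  rw [hrp.level_eq hxp, hrq.level_eq hxq]

include hD in
theorem lt_iff_of_mem {p q : KCond κ} (hp : p ∈ D) (hq : q ∈ D) {x y : Ordinal.{0}}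
    (hxp : x ∈ p.t.node) (hyp : y ∈ p.t.node) (hxq : x ∈ q.t.node) (hyq : y ∈ q.t.node) :
    p.t.lt x y ↔ q.t.lt x y := by
  obtain ⟨r, -, hrp, hrq⟩ := hD p hp q hq
  rw [hrp.lt_iff hxp hyp, hrq.lt_iff hxq hyq]

open Classical in
def unionLevel (x : Ordinal.{0}) : Ordinal.{0} :=
  if h : ∃ p ∈ D, x ∈ p.t.node then h.choose.t.level x else 0

include hD in
theorem unionLevel_eq {p : KCond κ} (hp : p ∈ D) {x : Ordinal.{0}} (hx : x ∈ p.t.node) :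
    unionLevel D x = p.t.level x := by
  have h : ∃ p ∈ D, x ∈ p.t.node := ⟨p, hp, hx⟩
  rw [unionLevel, dif_pos h]
  exact level_eq_of_mem D hD h.choose_spec.1 hp h.choose_spec.2 hx

def unionTree : LvTree where
  node := ⋃ p ∈ D, p.t.node
  lt x y := ∃ p ∈ D, p.t.lt x y
  level := unionLevel D
  lt_mem := by
    rintro x y ⟨p, hp, h⟩
    exact ⟨mem_biUnion hp (p.t.lt_mem h).1, mem_biUnion hp (p.t.lt_mem h).2⟩
  lt_trans' := by
    rintro x y z ⟨p, hp, hxy⟩ ⟨q, hq, hyz⟩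
    obtain ⟨r, hr, hrp, hrq⟩ := hD p hp q hq
    exact ⟨r, hr, r.t.lt_trans' ((hrp.lt_iff (p.t.lt_mem hxy).1 (p.t.lt_mem hxy).2).1 hxy)
      ((hrq.lt_iff (q.t.lt_mem hyz).1 (q.t.lt_mem hyz).2).1 hyz)⟩
  level_mono := by
    rintro x y ⟨p, hp, hxy⟩
    rw [unionLevel_eq D hD hp (p.t.lt_mem hxy).1, unionLevel_eq D hD hp (p.t.lt_mem hxy).2]
    exact p.t.level_mono hxy
  pred_linear := by
    rintro x y z ⟨p, hp, hyx⟩ ⟨q, hq, hzx⟩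
    obtain ⟨r, hr, hrp, hrq⟩ := hD p hp q hq
    rcases r.t.pred_linear ((hrp.lt_iff (p.t.lt_mem hyx).1 (p.t.lt_mem hyx).2).1 hyx)
      ((hrq.lt_iff (q.t.lt_mem hzx).1 (q.t.lt_mem hzx).2).1 hzx) with h | h | h
    exacts [Or.inl ⟨r, hr, h⟩, Or.inr (Or.inl h), Or.inr (Or.inr ⟨r, hr, h⟩)]
  pred_ex := by
    intro x hx β hβ
    obtain ⟨p, hp, hxp⟩ := mem_iUnion₂.1 hx
    rw [unionLevel_eq D hD hp hxp] at hβ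
    obtain ⟨y, hy, rfl⟩ := p.t.pred_ex x hxp β hβ
    exact ⟨y, ⟨p, hp, hy⟩, unionLevel_eq D hD hp (p.t.lt_mem hy).1⟩

end

section

variable {κ : Ordinal.{0}} {D : Set (KCond κ)}
  {hD : ∀ p ∈ D, ∀ q ∈ D, ∃ r ∈ D, KLE κ r p ∧ KLE κ r q} {p : KCond κ}

theorem unionTree_lt_iff (hp : p ∈ D) {x y : Ordinal.{0}} (hx : x ∈ p.t.node)
    (hy : y ∈ p.t.node) : (unionTree D hD).lt x y ↔ p.t.lt x y := by
  refine ⟨fun ⟨q, hq, h⟩ => ?_, fun h => ⟨p, hp, h⟩⟩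
  exact (lt_iff_of_mem D hD hq hp (q.t.lt_mem h).1 (q.t.lt_mem h).2 hx hy).1 h

theorem mem_node_iff_unionTree (hp : p ∈ D) {x : Ordinal.{0}} :
    x ∈ p.t.node ↔ x ∈ (unionTree D hD).node ∧ (unionTree D hD).level x ≤ p.top := by
  refine ⟨fun hx => ⟨mem_biUnion hp hx, (unionLevel_eq D hD hp hx).trans_le (p.level_le x hx)⟩,
    fun ⟨hx, hle⟩ => ?_⟩
  obtain ⟨q, hq, hxq⟩ := mem_iUnion₂.1 hx
  obtain ⟨r, -, hrp, hrq⟩ := hD p hp q hq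
  refine (hrp.2.1 x).2 ⟨hrq.node_subset hxq, ?_⟩
  rwa [← hrq.level_eq hxq, ← unionLevel_eq D hD hq hxq]

theorem lt_of_unionTree_lt (hp : p ∈ D) {x z : Ordinal.{0}} (hx : x ∈ p.t.node)
    (h : (unionTree D hD).lt z x) : p.t.lt z x := by
  have hz := ((unionTree D hD).lt_mem h).1
  have hlev := (unionTree D hD).level_mono h
  change unionLevel D z < unionLevel D x at hlev
  rw [unionLevel_eq D hD hp hx] at hlev
  have hzp := (mem_node_iff_unionTree hp).2 ⟨hz, (hlev.trans_le (p.level_le x hx)).le⟩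
  exact (unionTree_lt_iff hp hzp hx).1 h

theorem unionTree_lvl (hp : p ∈ D) {β : Ordinal.{0}} (hβ : β ≤ p.top) :
    (unionTree D hD).lvl β = p.t.lvl β := by
  ext x
  refine ⟨fun ⟨hx, hxβ⟩ => ?_, fun ⟨hx, hxβ⟩ => ⟨mem_biUnion hp hx, ?_⟩⟩
  · have hxp := (mem_node_iff_unionTree hp).2 ⟨hx, hxβ.trans_le hβ⟩
    exact ⟨hxp, (unionLevel_eq D hD hp hxp).symm.trans hxβ⟩
  · exact (unionLevel_eq D hD hp hx).trans hxβ

theorem regressiveAt_unionTree (hp : p ∈ D) {δ : Ordinal.{0}} (hδ : δ ≤ p.top)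
    (hreg : RegressiveAt p.t δ) : RegressiveAt (unionTree D hD) δ := by
  obtain ⟨f, hf, hfinc⟩ := hreg
  rw [RegressiveAt, unionTree_lvl hp hδ]
  refine ⟨f, fun x hx => ⟨p, hp, hf x hx⟩, fun x hx y hy hxy z hzx hzy => ?_⟩
  have hxy' : p.t.Incomp x y := ⟨fun h => hxy.1 ⟨p, hp, h⟩, fun h => hxy.2.1 ⟨p, hp, h⟩, hxy.2.2⟩
  obtain ⟨h₁, h₂⟩ := hfinc x hx y hy hxy' z (lt_of_unionTree_lt hp hx.1 hzx)
    (lt_of_unionTree_lt hp hy.1 hzy)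
  exact ⟨⟨p, hp, h₁⟩, ⟨p, hp, h₂⟩⟩

end

section

variable {κ : Ordinal.{0}} (D : Set (KCond κ))

def topLabels : Set Ordinal.{0} := ⋃ p ∈ D, p.h '' p.t.lvl p.top

def labelBranch (ξ : Ordinal.{0}) : Set Ordinal.{0} :=
  {z | ∃ p ∈ D, ∃ w ∈ p.t.lvl p.top, p.h w = ξ ∧ (p.t.lt z w ∨ z = w)}

variable {D} {hD : ∀ p ∈ D, ∀ q ∈ D, ∃ r ∈ D, KLE κ r p ∧ KLE κ r q}

theorem labelBranch_subset (ξ : Ordinal.{0}) : labelBranch D ξ ⊆ (unionTree D hD).node := by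
  rintro z ⟨p, hp, w, hw, -, hz | rfl⟩
  exacts [mem_biUnion hp (p.t.lt_mem hz).1, mem_biUnion hp hw.1]

theorem mem_labelBranch_of_lt {ξ y z : Ordinal.{0}} (hy : y ∈ labelBranch D ξ)
    (hzy : (unionTree D hD).lt z y) : z ∈ labelBranch D ξ := by
  obtain ⟨p, hp, w, hw, hξ, hyw⟩ := hy
  have hyp : y ∈ p.t.node := by rcases hyw with h | rfl; exacts [(p.t.lt_mem h).1, hw.1]
  have hzy' := lt_of_unionTree_lt hp hyp hzy
  refine ⟨p, hp, w, hw, hξ, Or.inl ?_⟩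
  rcases hyw with h | rfl
  exacts [p.t.lt_trans' hzy' h, hzy']

/-- Two nodes of `labelBranch D ξ` lie, in a common extension `r ∈ D`, below the unique top node
of `r` labelled `ξ`. -/
theorem labelBranch_chain {ξ x y : Ordinal.{0}} (hx : x ∈ labelBranch D ξ)
    (hy : y ∈ labelBranch D ξ) :
    (unionTree D hD).lt x y ∨ x = y ∨ (unionTree D hD).lt y x := by
  obtain ⟨p, hp, w, hw, rfl, hxw⟩ := hx
  obtain ⟨q, hq, w', hw', hξ, hyw'⟩ := hy
  obtain ⟨r, hr, hrp, hrq⟩ := hD p hp q hq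
  obtain ⟨v, hv, hvξ, hxv⟩ := hrp.exists_top_above hw hxw
  obtain ⟨v', hv', hv'ξ, hyv'⟩ := hrq.exists_top_above hw' hyw'
  obtain rfl := r.h_inj v hv v' hv' (hvξ.trans (hξ.symm.trans hv'ξ.symm))
  rcases hxv with hxv | rfl <;> rcases hyv' with hyv | rfl
  · rcases r.t.pred_linear hxv hyv with h | h | h
    exacts [Or.inl ⟨r, hr, h⟩, Or.inr (Or.inl h), Or.inr (Or.inr ⟨r, hr, h⟩)]
  · exact Or.inl ⟨r, hr, hxv⟩
  · exact Or.inr (Or.inr ⟨r, hr, hyv⟩)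
  · exact Or.inr (Or.inl rfl)

theorem exists_mem_labelBranch {ξ β : Ordinal.{0}} (hξ : ξ ∈ topLabels D) {q : KCond κ}
    (hq : q ∈ D) (hβ : β ≤ q.top) :
    ∃ x ∈ labelBranch D ξ, (unionTree D hD).level x = β := by
  obtain ⟨p, hp, w, hw, rfl⟩ := mem_iUnion₂.1 hξ
  obtain ⟨r, hr, hrp, hrq⟩ := hD p hp q hq
  obtain ⟨v, hv, hvξ, -⟩ := hrp.exists_top_above hw (Or.inr rfl)
  obtain ⟨y, hyv, rfl⟩ := r.t.exists_le_level hv.1 (hv.2 ▸ hβ.trans hrq.1)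
  have hy : y ∈ r.t.node := by rcases hyv with h | rfl; exacts [(r.t.lt_mem h).1, hv.1]
  exact ⟨y, ⟨r, hr, v, hv, hvξ, hyv⟩, unionLevel_eq D hD hr hy⟩

theorem exists_mem_labelBranch_of_mem {x : Ordinal.{0}} (hx : x ∈ (unionTree D hD).node) :
    ∃ ξ ∈ topLabels D, x ∈ labelBranch D ξ := by
  obtain ⟨p, hp, hxp⟩ := mem_iUnion₂.1 hx
  obtain ⟨w, hw, hxw⟩ := p.normal x hxp p.top (p.level_le x hxp) le_rfl
  refine ⟨p.h w, mem_biUnion hp ⟨w, hw, rfl⟩, p, hp, w, hw, rfl, ?_⟩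
  rcases hxw with h | rfl
  exacts [Or.inl h, Or.inr rfl]

end

section unionCap

variable {κ : Ordinal.{0}} (D : Set (KCond κ))
  (hD : ∀ p ∈ D, ∀ q ∈ D, ∃ r ∈ D, KLE κ r p ∧ KLE κ r q)
  {a top : Ordinal.{0}} (htop : ∀ p ∈ D, p.top < a) (hcof : ∀ β < a, ∃ p ∈ D, β ≤ p.top)
  {code : Ordinal.{0} × Ordinal.{0} → Ordinal.{0}} (hinj : InjOn code (topLabels D ×ˢ Icc a top))
  (hfresh : ∀ q ∈ topLabels D ×ˢ Icc a top, code q ∉ (unionTree D hD).node)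

def unionCap : (unionTree D hD).Cap where
  labels := topLabels D
  branch := labelBranch D
  base := a
  top := top
  code := code
  level_lt_base x hx := by
    obtain ⟨p, hp, hxp⟩ := mem_iUnion₂.1 hx
    exact (unionLevel_eq D hD hp hxp).trans_le (p.level_le x hxp) |>.trans_lt (htop p hp)
  branch_subset ξ _ := labelBranch_subset ξ
  mem_branch_of_lt _ _ _ hy _ := mem_labelBranch_of_lt hy
  branch_chain _ _ _ hx _ hy := labelBranch_chain hx hy
  exists_mem_branch ξ hξ β hβ := by
    obtain ⟨q, hq, hβq⟩ := hcof β hβ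
    exact exists_mem_labelBranch hξ hq hβq
  injOn_code := hinj
  code_notMem := hfresh

end unionCap

section

variable {κ : Ordinal.{0}} (hκ : InaccOrd κ)

include hκ in
theorem mk_node_lt (p : KCond κ) : #p.t.node < lift.{1} κ.card := by
  have hsub : p.t.node ⊆ ⋃ β ∈ Iio (p.top + 1), p.t.lvl β := fun x hx =>
    mem_biUnion (Order.lt_add_one_iff.2 (p.level_le x hx)) ⟨hx, rfl⟩
  exact (mk_le_mk_of_subset hsub).trans_lt <|
    hκ.mk_biUnion_lt (hκ.mk_Iio_lt (hκ.add_one_lt p.top_lt)) fun β _ => p.small β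

variable {D : Set (KCond κ)} (hD : ∀ p ∈ D, ∀ q ∈ D, ∃ r ∈ D, KLE κ r p ∧ KLE κ r q)
  (hsmall : #D < lift.{1} κ.card)

include hκ hsmall in
theorem mk_unionTree_lvl_lt (β : Ordinal.{0}) :
    #((unionTree D hD).lvl β) < lift.{1} κ.card := by
  have hsub : (unionTree D hD).lvl β ⊆ ⋃ p ∈ D, p.t.lvl β := by
    rintro x ⟨hx, hxβ⟩
    obtain ⟨p, hp, hxp⟩ := mem_iUnion₂.1 hx
    exact mem_biUnion hp ⟨hxp, (unionLevel_eq D hD hp hxp).symm.trans hxβ⟩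
  exact (mk_le_mk_of_subset hsub).trans_lt (hκ.mk_biUnion_lt hsmall fun p _ => p.small β)

include hκ hsmall in
theorem mk_topLabels_lt : #(topLabels D) < lift.{1} κ.card :=
  hκ.mk_biUnion_lt hsmall fun p _ => mk_image_le.trans_lt (p.small p.top)

include hκ hsmall in
theorem exists_code {top : Ordinal.{0}} (htop : top < κ) (a : Ordinal.{0}) :
    ∃ code : Ordinal.{0} × Ordinal.{0} → Ordinal.{0}, InjOn code (topLabels D ×ˢ Icc a top) ∧
      ∀ q ∈ topLabels D ×ˢ Icc a top, code q ∉ (unionTree D hD).node ∧ code q < κ := by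
  have hnode : ∀ x ∈ (unionTree D hD).node, x < κ := fun x hx => by
    obtain ⟨p, -, hxp⟩ := mem_iUnion₂.1 hx
    exact p.node_sub hxp
  have hΛ : sSup (unionTree D hD).node + 1 < κ := hκ.add_one_lt <|
    hκ.sSup_lt hnode (hκ.mk_biUnion_lt hsmall fun p _ => mk_node_lt hκ p)
  have hIcc : #(Icc a top) < lift.{1} κ.card :=
    (mk_le_mk_of_subset fun b hb => Order.lt_add_one_iff.2 hb.2).trans_lt
      (hκ.mk_Iio_lt (hκ.add_one_lt htop))
  have hslots : #(topLabels D ×ˢ Icc a top) < lift.{1} κ.card := by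
    rw [mk_congr (Equiv.Set.prod _ _), mk_prod, lift_id, lift_id]
    exact mul_lt_of_lt hκ.aleph0_le_lift_card (mk_topLabels_lt hκ hsmall) hIcc
  obtain ⟨code, hinj, hmaps⟩ := exists_injOn_Ico hκ hslots hΛ
  refine ⟨code, hinj, fun q hq => ⟨fun hmem => ?_, (hmaps hq).2⟩⟩
  have hbdd : BddAbove (unionTree D hD).node := ⟨κ, fun x hx => (hnode x hx).le⟩
  exact (hmaps hq).1.not_gt (Order.lt_add_one_iff.2 (le_csSup hbdd hmem))

end

section

variable {κ : Ordinal.{0}} (hκ : InaccOrd κ)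

include hκ in
theorem exists_le_of_directed {D : Set (KCond κ)}
    (hD : ∀ p ∈ D, ∀ q ∈ D, ∃ r ∈ D, KLE κ r p ∧ KLE κ r q) (hne : D.Nonempty)
    (hsmall : #D < lift.{1} κ.card) {a top : Ordinal.{0}} (htop : ∀ p ∈ D, p.top < a)
    (hcof : ∀ β < a, ∃ p ∈ D, β ≤ p.top) (ha : ¬ InaccOrd a) (hatop : a ≤ top)
    (htopκ : top < κ) : ∃ r : KCond κ, r.top = top ∧ ∀ p ∈ D, KLE κ r p := by
  obtain ⟨code, hinj, hcode⟩ := exists_code hκ hD hsmall htopκ a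
  set C := unionCap D hD htop hcof hinj fun q hq => (hcode q hq).1
  have hlabels_ne : C.labels.Nonempty := by
    obtain ⟨p, hp⟩ := hne
    obtain ⟨w, hw⟩ := p.levels_ne p.top le_rfl
    exact ⟨p.h w, mem_biUnion hp ⟨w, hw, rfl⟩⟩
  have hlabels_lt : ∀ ξ ∈ C.labels, ξ < cardSucc κ := fun ξ hξ => by
    obtain ⟨p, -, w, hw, rfl⟩ := mem_iUnion₂.1 hξ
    exact p.h_lt w hw
  have hregr : ∀ δ < C.base, InaccOrd δ → RegressiveAt (unionTree D hD) δ := fun δ hδ hδi => by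
    obtain ⟨p, hp, hδp⟩ := hcof δ hδ
    exact regressiveAt_unionTree hp hδp (p.regr δ hδp hδi)
  refine ⟨C.toKCond hκ (fun x hx => ?_) (mk_unionTree_lvl_lt hκ hD hsmall)
    (mk_topLabels_lt hκ hsmall) hlabels_ne hlabels_lt (fun x hx => exists_mem_labelBranch_of_mem hx)
    hregr ha hatop htopκ fun q hq => (hcode q hq).2, rfl, fun p hp => ?_⟩
  · obtain ⟨p, -, hxp⟩ := mem_iUnion₂.1 hx
    exact p.node_sub hxp
  exact C.toKCond_le (fun x => mem_node_iff_unionTree hp)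
    (fun x hx y hy => (unionTree_lt_iff hp hx hy).symm)
    (fun x hx => (unionLevel_eq D hD hp hx).symm) (htop p hp)
    fun w hw => ⟨mem_biUnion hp ⟨w, hw, rfl⟩, p, hp, w, hw, rfl, Or.inr rfl⟩

def point : KCond κ where
  t := LvTree.point
  top := 0
  h _ := 0
  node_sub := by
    rintro x rfl
    exact hκ.pos
  top_lt := hκ.pos
  level_le _ _ := le_rfl
  levels_ne β hβ := ⟨0, rfl, (nonpos_iff_eq_zero.1 hβ).symm⟩
  small β := (mk_le_mk_of_subset fun _ hx => hx.1).trans_lt <|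
    (mk_singleton _).trans_lt (one_lt_aleph0.trans_le hκ.aleph0_le_lift_card)
  normal x hx β hxβ hβ := ⟨x, ⟨hx, le_antisymm zero_le hβ ▸ rfl⟩, Or.inr rfl⟩
  regr δ hδ hδi := (hδi.pos.trans_le hδ).false.elim
  h_inj x hx y hy _ := hx.1.trans hy.1.symm
  h_lt _ _ := by
    rw [cardSucc, Cardinal.lt_ord, Ordinal.card_zero]
    exact (Order.lt_succ κ.card).trans_le' zero_le

include hκ in
theorem exists_le_top_gt (p : KCond κ) {γ : Ordinal.{0}} (hγ : γ < κ) :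
    ∃ q : KCond κ, KLE κ q p ∧ γ < q.top := by
  obtain ⟨q, hq, hqp⟩ := exists_le_of_directed hκ (D := {p})
    (by simp only [mem_singleton_iff, forall_eq, exists_eq_left]
        exact ⟨KLE.refl p, KLE.refl p⟩) (singleton_nonempty p)
    ((mk_singleton p).trans_lt (one_lt_aleph0.trans_le hκ.aleph0_le_lift_card))
    (fun _ hq => hq ▸ lt_add_one _) (fun β hβ => ⟨p, rfl, Order.lt_add_one_iff.1 hβ⟩)
    (fun h => not_isSuccLimit_add_one p.top h.isSuccLimit) le_add_self
    (hκ.add_lt hγ (hκ.add_one_lt p.top_lt))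
  exact ⟨q, hqp p rfl, hq ▸ lt_add_of_pos_right γ (Order.lt_add_one_iff.2 zero_le)⟩

include hκ in
theorem exists_le_of_directed_of_mk_le {γ : Ordinal.{0}} (hγ : γ < κ) {D : Set (KCond κ)}
    (hgt : ∀ p ∈ D, γ < p.top) (hD : ∀ p ∈ D, ∀ q ∈ D, ∃ r ∈ D, KLE κ r p ∧ KLE κ r q)
    (hsize : #D ≤ lift.{1} γ.card) : ∃ r : KCond κ, γ < r.top ∧ ∀ p ∈ D, KLE κ r p := by
  rcases D.eq_empty_or_nonempty with rfl | hne
  · obtain ⟨r, -, hr⟩ := exists_le_top_gt hκ (point hκ) hγ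
    exact ⟨r, hr, by simp⟩
  set S := (fun p : KCond κ => p.top + 1) '' D
  have hbdd : BddAbove S := ⟨κ, by rintro _ ⟨p, -, rfl⟩; exact (hκ.add_one_lt p.top_lt).le⟩
  have htop : ∀ p ∈ D, p.top < sSup S := fun p hp =>
    (lt_add_one p.top).trans_le (le_csSup hbdd ⟨p, hp, rfl⟩)
  have hsmall : #D < lift.{1} κ.card := hsize.trans_lt (lift_lt.2 (hκ.lt_iff_card_lt.1 hγ))
  have hγS : γ < sSup S := by
    obtain ⟨p, hp⟩ := hne
    exact (hgt p hp).trans (htop p hp)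
  have hcof : ∀ β < sSup S, ∃ p ∈ D, β ≤ p.top := fun β hβ => by
    obtain ⟨_, ⟨p, hp, rfl⟩, hβp⟩ := (lt_csSup_iff hbdd (hne.image _)).1 hβ
    exact ⟨p, hp, Order.lt_add_one_iff.1 hβp⟩
  have hS : ¬ InaccOrd (sSup S) := by
    refine not_inaccOrd_sSup hbdd ?_ (mk_image_le.trans hsize) hγS
    rintro _ ⟨p, -, rfl⟩
    exact Order.not_isSuccLimit_add_one p.top
  have hSκ : sSup S < κ :=
    hκ.sSup_lt (by rintro _ ⟨p, -, rfl⟩; exact hκ.add_one_lt p.top_lt) (mk_image_le.trans_lt hsmall)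
  obtain ⟨r, hr_top, hr⟩ := exists_le_of_directed hκ hD hne hsmall htop hcof hS le_rfl hSκ
  exact ⟨r, hr_top ▸ hγS, hr⟩

end

end KCond

/-- Let `κ` be Mahlo.  For each `γ < κ` the set
`D_γ = {(t,h) ∈ K_κ : ht(t) > γ}` is dense in `K_κ` and `|γ|⁺`-directed-closed;
hence `K_κ` is almost `κ`-directed-closed. -/
theorem stmt_6 (κ : Ordinal.{0}) (hκ : MahloOrd κ) :
    (∀ γ, γ < κ →
      (∀ p : KCond κ, ∃ q : KCond κ, KLE κ q p ∧ γ < q.top) ∧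
      (∀ D : Set (KCond κ), (∀ p ∈ D, γ < p.top) →
        (∀ p ∈ D, ∀ q ∈ D, ∃ r ∈ D, KLE κ r p ∧ KLE κ r q) →
        Cardinal.mk D ≤ Cardinal.lift.{1} γ.card →
        ∃ r : KCond κ, γ < r.top ∧ ∀ p ∈ D, KLE κ r p)) ∧
    (∀ γ, γ < κ → ∃ D : Set (KCond κ),
      (∀ p : KCond κ, ∃ q ∈ D, KLE κ q p) ∧
      (∀ D' : Set (KCond κ), D' ⊆ D →
        (∀ p ∈ D', ∀ q ∈ D', ∃ r ∈ D', KLE κ r p ∧ KLE κ r q) →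
        Cardinal.mk D' ≤ Cardinal.lift.{1} γ.card →
        ∃ r ∈ D, ∀ p ∈ D', KLE κ r p)) := by
  have hκ' : InaccOrd κ := hκ.1
  refine ⟨fun γ hγ => ⟨fun p => KCond.exists_le_top_gt hκ' p hγ,
      fun D hgt hD hsize => KCond.exists_le_of_directed_of_mk_le hκ' hγ hgt hD hsize⟩,
    fun γ hγ => ⟨{p | γ < p.top}, fun p => ?_,
      fun D hsub hD hsize => KCond.exists_le_of_directed_of_mk_le hκ' hγ hsub hD hsize⟩⟩
  obtain ⟨q, hqp, hq⟩ := KCond.exists_le_top_gt hκ' p hγ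
  exact ⟨q, hq, hqp⟩
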